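/- Let σ² > 0, P > 0, N₁ > 0, α₁ ∈ (0,1), ρ ∈ (0,1). The hybrid-coding distortion σ²(1-ρ²)/(1 + α₁P/N₁) + ρ²σ²/(1 + (1-α₁)P/(α₁P+N₁)) is strictly less than the separation (Scheme A) distortion σ²/(1 + α₁P/N₁) if and only if P/N₁ < (1 - 2α₁)/α₁². -/

import Mathlib

/-!
Both distortions share the term `σ²(1-ρ²)/(1 + α₁P/N₁)`; what remains is `ρ²σ²` divided by the
effective SNR factor of the hybrid scheme resp. of Scheme A. So hybrid coding wins exactly when
its factor is larger, `α₁P/N₁ < (1-α₁)P/(α₁P+N₁)`, which after clearing denominators and the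
common factor `P` is the linear condition `α₁²P < (1-2α₁)N₁`.
-/

theorem sub_div_add_div_lt_div_iff {a c u v : ℝ} (hc : 0 < c) (hu : 0 < u) (hv : 0 < v) :
    (a - c) / u + c / v < a / u ↔ u < v := by
  rw [sub_div, sub_add_comm, add_lt_iff_neg_right, sub_neg,
    div_lt_div_iff_of_pos_left hc hv hu]

theorem separation_snr_lt_hybrid_snr_iff {P N α : ℝ} (hP : 0 < P) (hN : 0 < N) (hα : 0 < α) :
    α * P / N < (1 - α) * P / (α * P + N) ↔ P / N < (1 - 2 * α) / α ^ 2 :=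
  calc α * P / N < (1 - α) * P / (α * P + N)
      ↔ P * (α * (α * P + N)) < P * ((1 - α) * N) := by
        rw [div_lt_div_iff₀ hN (by positivity)]; ring_nf
    _ ↔ α * (α * P + N) < (1 - α) * N := mul_lt_mul_iff_of_pos_left hP
    _ ↔ P * α ^ 2 < (1 - 2 * α) * N := by constructor <;> intro h <;> linarith
    _ ↔ P / N < (1 - 2 * α) / α ^ 2 := (div_lt_div_iff₀ hN (by positivity)).symm

/-- Hybrid coding beats separation Scheme A iff P/N₁ < (1-2α₁)/α₁². -/
theorem stmt_3 (σ2 P N1 α1 ρ : ℝ) (hσ : 0 < σ2) (hP : 0 < P) (hN1 : 0 < N1)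
    (hα1 : α1 ∈ Set.Ioo (0:ℝ) 1) (hρ : ρ ∈ Set.Ioo (0:ℝ) 1) :
    σ2 * (1 - ρ^2) / (1 + α1 * P / N1)
        + ρ^2 * σ2 / (1 + (1 - α1) * P / (α1 * P + N1))
      < σ2 / (1 + α1 * P / N1)
    ↔ P / N1 < (1 - 2 * α1) / α1^2 := by
  obtain ⟨hα0, hα_lt_one⟩ := hα1
  have hsep : 0 < 1 + α1 * P / N1 := by positivity
  have hhyb : 0 < 1 + (1 - α1) * P / (α1 * P + N1) :=
    add_pos_of_pos_of_nonneg one_pos <|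
      div_nonneg (mul_nonneg (sub_nonneg.2 hα_lt_one.le) hP.le) (by positivity)
  have hρσ : 0 < ρ ^ 2 * σ2 := mul_pos (pow_pos hρ.1 2) hσ
  rw [mul_one_sub, mul_comm σ2, sub_div_add_div_lt_div_iff hρσ hsep hhyb, add_lt_add_iff_left,
    separation_snr_lt_hybrid_snr_iff hP hN1 hα0]
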